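/- Let f: ℝⁿ → ℝⁿ satisfy |f(x) − f(y)| ≤ F|x − y| componentwise, where F = I − γG, G_{ii} = |H_{ii}|, G_{ij} = −|H_{ij}| (i≠j), and H is β-diagonally dominant with γ as in the step-size bound. Then for any fixed point x* of f and all x ∈ ℝⁿ: ‖f(x) − x*‖_max ≤ (1 − γβ) ‖x − x*‖_max. -/
import Mathlib


/-- with F = I − γG, G the comparison matrix of a β-diagonally
dominant H, γ below the step-size bound, and |f(x) − f(y)| ≤ F|x − y|
componentwise, any fixed point x* of f satisfies
‖f(x) − x*‖_max ≤ (1 − γβ)‖x − x*‖_max for all x. -/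
theorem stmt8 {n : ℕ} (hn : 0 < n)
    (H : Matrix (Fin n) (Fin n) ℝ) (β γ : ℝ) (hβ : 0 < β) (hγ : 0 < γ)
    (hdd : ∀ i, ∑ j ∈ Finset.univ.erase i, |H i j| ≤ |H i i| - β)
    (hγs : ∀ i, γ * ∑ j, |H i j| < 1)
    (G F : Matrix (Fin n) (Fin n) ℝ)
    (hG : ∀ i j, G i j = if i = j then |H i i| else -|H i j|)
    (hF : F = 1 - γ • G)
    (f : (Fin n → ℝ) → (Fin n → ℝ))
    (hf : ∀ x y : Fin n → ℝ, ∀ i, |f x i - f y i| ≤ ∑ j, F i j * |x j - y j|)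
    (xstar : Fin n → ℝ) (hfix : f xstar = xstar) (x : Fin n → ℝ) :
    Finset.univ.sup' ⟨⟨0, hn⟩, Finset.mem_univ _⟩ (fun i => |f x i - xstar i|) ≤
      (1 - γ * β) *
        Finset.univ.sup' ⟨⟨0, hn⟩, Finset.mem_univ _⟩ (fun i => |x i - xstar i|) := by
  have ne : (Finset.univ : Finset (Fin n)).Nonempty := ⟨⟨0, hn⟩, Finset.mem_univ _⟩
  set M := Finset.univ.sup' ne (fun i => |x i - xstar i|) with hM
  have hM0 : 0 ≤ M := le_trans (abs_nonneg _) (Finset.le_sup' (fun i => |x i - xstar i|) (Finset.mem_univ ⟨0, hn⟩))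
  have hFentry : ∀ i j, F i j = (if i = j then 1 else 0) - γ * (if i = j then |H i i| else -|H i j|) := by
    intro i j
    simp [hF, hG i j, Matrix.one_apply, Matrix.sub_apply, Matrix.smul_apply]
  have hFnonneg : ∀ i j, 0 ≤ F i j := by
    intro i j
    rw [hFentry]
    by_cases h : i = j
    · simp [h]
      have h1 : γ * |H j j| ≤ γ * ∑ k, |H j k| := by
        apply mul_le_mul_of_nonneg_left _ hγ.le
        exact Finset.single_le_sum (fun k _ => abs_nonneg (H j k)) (Finset.mem_univ j)
      linarith [hγs j]
    · simp [h]
      positivity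
  have hrow : ∀ i, ∑ j, F i j ≤ 1 - γ * β := by
    intro i
    have hsplit : ∑ j, F i j = F i i + ∑ j ∈ Finset.univ.erase i, F i j :=
      (Finset.add_sum_erase _ _ (Finset.mem_univ i)).symm
    have hFii : F i i = 1 - γ * |H i i| := by rw [hFentry]; simp
    have hFoff : ∑ j ∈ Finset.univ.erase i, F i j = γ * ∑ j ∈ Finset.univ.erase i, |H i j| := by
      rw [Finset.mul_sum]
      apply Finset.sum_congr rfl
      intro j hj
      have : i ≠ j := fun h => (Finset.mem_erase.mp hj).1 h.symm
      rw [hFentry]; simp [this]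
    rw [hsplit, hFii, hFoff]
    have := hdd i
    nlinarith
  apply Finset.sup'_le
  intro i _
  calc |f x i - xstar i| = |f x i - f xstar i| := by rw [hfix]
    _ ≤ ∑ j, F i j * |x j - xstar j| := hf x xstar i
    _ ≤ ∑ j, F i j * M := by
        apply Finset.sum_le_sum
        intro j _
        exact mul_le_mul_of_nonneg_left (Finset.le_sup' (fun i => |x i - xstar i|) (Finset.mem_univ j)) (hFnonneg i j)
    _ = (∑ j, F i j) * M := by rw [Finset.sum_mul]
    _ ≤ (1 - γ * β) * M := mul_le_mul_of_nonneg_right (hrow i) hM0
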